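/- arXiv:2402.16756 — 2 statements merged into one kernel-verified Lean document; each statement's English description precedes it below -/
import Mathlib

section
/- (Explicit solitary-wave solution: m = 1 limit of solution (4.2.2).) Let a, b, d ∈ ℝ with b − 2d ≠ 0, let λ > 0 and σ ≠ 0, and define sech t = 1/cosh t, η(ξ) = (a² − σ²(b−2d)(b − 2d − 4adλ²))/(σ²(b−2d)²) − (12adλ²/(b−2d))·sech²(λξ), w(ξ) = (a + σ²(b−2d)(1 − 4dλ²))/(σ(b−2d)) + 12dλ²σ·sech²(λξ). Then (η, w) satisfies, for all ξ ∈ ℝ, the traveling-wave ODE system of the abcd-system with c = 0: −σ·η′(ξ) + w′(ξ) + (η·w)′(ξ) + a·w‴(ξ) + b·σ·η‴(ξ) = 0 and −σ·w′(ξ) + η′(ξ) + w(ξ)·w′(ξ) + d·σ·w‴(ξ) = 0. -/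
/-!
Both profiles are affine in `S = sech² (λ ξ)`, and `S` solves `S'' = 4 λ² S - 6 λ² S²`, hence
`S''' = (4 λ² - 12 λ² S) S'`. Every term of both equations is therefore `S'` times a polynomial
in `S`, and the chosen constants make these polynomials vanish identically.
-/

open Real

section SechSq

lemma hasDerivAt_cosh_mul (lam x : ℝ) :
    HasDerivAt (fun t => cosh (lam * t)) (lam * sinh (lam * x)) x := by
  simpa [mul_comm] using ((hasDerivAt_id x).const_mul lam).cosh

lemma hasDerivAt_sinh_mul (lam x : ℝ) :
    HasDerivAt (fun t => sinh (lam * t)) (lam * cosh (lam * x)) x := by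
  simpa [mul_comm] using ((hasDerivAt_id x).const_mul lam).sinh

lemma hasDerivAt_sech_sq (lam x : ℝ) :
    HasDerivAt (fun t => (1 / cosh (lam * t)) ^ 2)
      (-2 * lam * sinh (lam * x) / cosh (lam * x) ^ 3) x := by
  have hc := (cosh_pos (lam * x)).ne'
  refine (((hasDerivAt_const x (1 : ℝ)).fun_div (hasDerivAt_cosh_mul lam x) hc).fun_pow 2
    ).congr_deriv ?_
  norm_num
  field_simp

lemma hasDerivAt_sech_sq_deriv (lam x : ℝ) :
    HasDerivAt (fun t => -2 * lam * sinh (lam * t) / cosh (lam * t) ^ 3)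
      (4 * lam ^ 2 * (1 / cosh (lam * x)) ^ 2 + (-6 * lam ^ 2) * ((1 / cosh (lam * x)) ^ 2) ^ 2)
      x := by
  have hc := (cosh_pos (lam * x)).ne'
  refine (((hasDerivAt_sinh_mul lam x).const_mul (-2 * lam)).fun_div
    ((hasDerivAt_cosh_mul lam x).fun_pow 3) (pow_ne_zero 3 hc)).congr_deriv ?_
  field_simp
  linear_combination (-6 * lam ^ 2 * cosh (lam * x) ^ 2) * cosh_sq_sub_sinh_sq (lam * x)

end SechSq

section AffineProfile

variable {S S' : ℝ → ℝ} {α β : ℝ}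

lemma hasDerivAt_affine (hS : ∀ x, HasDerivAt S (S' x) x) (A B x : ℝ) :
    HasDerivAt (fun t => A + B * S t) (B * S' x) x :=
  ((hS x).const_mul B).const_add A

lemma deriv_affine (hS : ∀ x, HasDerivAt S (S' x) x) (A B : ℝ) :
    deriv (fun t => A + B * S t) = fun x => B * S' x :=
  funext fun x => (hasDerivAt_affine hS A B x).deriv

lemma deriv_deriv_deriv_affine (hS : ∀ x, HasDerivAt S (S' x) x)
    (hS' : ∀ x, HasDerivAt S' (α * S x + β * S x ^ 2) x) (A B : ℝ) :
    deriv (deriv (deriv (fun t => A + B * S t))) = fun x => B * ((α + 2 * β * S x) * S' x) := by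
  have h2 : deriv (deriv (fun t => A + B * S t)) = fun x => B * (α * S x + β * S x ^ 2) := by
    rw [deriv_affine hS]
    exact funext fun x => ((hS' x).const_mul B).deriv
  rw [h2]
  refine funext fun x => (HasDerivAt.const_mul B ?_).deriv
  refine (((hS x).const_mul α).fun_add (((hS x).fun_pow 2).const_mul β)).congr_deriv ?_
  push_cast
  ring

end AffineProfile

theorem abcd_solitary_wave_from_4_2_2_general
    (a b d σ lam : ℝ) (hbd : b - 2*d ≠ 0) (hσ : σ ≠ 0)
    (η w : ℝ → ℝ)
    (hη : ∀ ξ : ℝ, η ξ = (a^2 - σ^2*(b - 2*d)*(b - 2*d - 4*a*d*lam^2))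
        / (σ^2*(b - 2*d)^2)
        - (12*a*d*lam^2/(b - 2*d)) * (1 / Real.cosh (lam * ξ)) ^ 2)
    (hw : ∀ ξ : ℝ, w ξ = (a + σ^2*(b - 2*d)*(1 - 4*d*lam^2)) / (σ*(b - 2*d))
        + 12*d*lam^2*σ * (1 / Real.cosh (lam * ξ)) ^ 2) :
    ∀ ξ : ℝ,
      (-σ * deriv η ξ + deriv w ξ + deriv (fun x => η x * w x) ξ
        + a * deriv (deriv (deriv w)) ξ + b * σ * deriv (deriv (deriv η)) ξ = 0) ∧
      (-σ * deriv w ξ + deriv η ξ + w ξ * deriv w ξ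
        + d * σ * deriv (deriv (deriv w)) ξ = 0) := by
  set S : ℝ → ℝ := fun x => (1 / cosh (lam * x)) ^ 2
  set S' : ℝ → ℝ := fun x => -2 * lam * sinh (lam * x) / cosh (lam * x) ^ 3
  have hS : ∀ x, HasDerivAt S (S' x) x := hasDerivAt_sech_sq lam
  have hS' : ∀ x, HasDerivAt S' (4 * lam ^ 2 * S x + (-6 * lam ^ 2) * S x ^ 2) x :=
    hasDerivAt_sech_sq_deriv lam
  set Aη := (a^2 - σ^2*(b - 2*d)*(b - 2*d - 4*a*d*lam^2)) / (σ^2*(b - 2*d)^2) with hAη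
  set Bη := 12*a*d*lam^2/(b - 2*d) with hBη
  set Aw := (a + σ^2*(b - 2*d)*(1 - 4*d*lam^2)) / (σ*(b - 2*d)) with hAw
  set Bw := 12*d*lam^2*σ with hBw
  have hηS : η = fun t => Aη + (-Bη) * S t := funext fun t => by rw [hη t]; ring
  have hwS : w = fun t => Aw + Bw * S t := funext hw
  intro ξ
  have hprod := ((hasDerivAt_affine hS Aη (-Bη) ξ).fun_mul (hasDerivAt_affine hS Aw Bw ξ)).deriv
  rw [hηS, hwS, hprod, deriv_deriv_deriv_affine hS hS', deriv_deriv_deriv_affine hS hS',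
    deriv_affine hS, deriv_affine hS, hAη, hBη, hAw, hBw]
  have hbd' : b - d * 2 ≠ 0 := by rwa [mul_comm]
  constructor <;> field_simp <;> ring

/-- the explicit solitary-wave solution obtained as the `m = 1` limit
of solution (4.2.2) solves the traveling-wave ODE system of the abcd-system with
`c = 0`. -/
theorem abcd_solitary_wave_from_4_2_2
    (a b d σ lam : ℝ) (hbd : b - 2*d ≠ 0) (hlam : 0 < lam) (hσ : σ ≠ 0)
    (η w : ℝ → ℝ)
    (hη : ∀ ξ : ℝ, η ξ = (a^2 - σ^2*(b - 2*d)*(b - 2*d - 4*a*d*lam^2))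
        / (σ^2*(b - 2*d)^2)
        - (12*a*d*lam^2/(b - 2*d)) * (1 / Real.cosh (lam * ξ)) ^ 2)
    (hw : ∀ ξ : ℝ, w ξ = (a + σ^2*(b - 2*d)*(1 - 4*d*lam^2)) / (σ*(b - 2*d))
        + 12*d*lam^2*σ * (1 / Real.cosh (lam * ξ)) ^ 2) :
    ∀ ξ : ℝ,
      (-σ * deriv η ξ + deriv w ξ + deriv (fun x => η x * w x) ξ
        + a * deriv (deriv (deriv w)) ξ + b * σ * deriv (deriv (deriv η)) ξ = 0) ∧
      (-σ * deriv w ξ + deriv η ξ + w ξ * deriv w ξ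
        + d * σ * deriv (deriv (deriv w)) ξ = 0) :=
  abcd_solitary_wave_from_4_2_2_general a b d σ lam hbd hσ η w hη hw
end

section
/- (Explicit solitary-wave solution: m = 1 limit of the semi-trivial solution (4.3).) Let c, d, σ ∈ ℝ and λ > 0, and define sech t = 1/cosh t, η(ξ) = −1, w(ξ) = σ(1 − 4dλ²) + 12dλ²σ·sech²(λξ). Then (η, w) satisfies, for all ξ ∈ ℝ, the traveling-wave ODE system of the abcd-system with a = b = 0: −σ·η′(ξ) + w′(ξ) + (η·w)′(ξ) = 0 and −σ·w′(ξ) + η′(ξ) + w(ξ)·w′(ξ) + c·η‴(ξ) + d·σ·w‴(ξ) = 0. -/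
/-!
`T = tanh (λ ξ)` solves the Riccati equation `T' = λ (1 - T²)`, so differentiation maps
polynomials in `T` to polynomials in `T`: `(p ∘ T)' = (λ (1 - X²) p') ∘ T`. Since
`sech² = 1 - tanh²`, both `η` and `w` are polynomials in `T`, and the two traveling-wave
equations reduce to polynomial identities in `T`.
-/

open Real Polynomial

lemma Real.one_div_cosh_sq (x : ℝ) : (1 / cosh x) ^ 2 = 1 - tanh x ^ 2 := by
  have hc : cosh x ≠ 0 := (cosh_pos x).ne'
  rw [tanh_eq_sinh_div_cosh]
  field_simp
  linear_combination -cosh_sq_sub_sinh_sq x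

lemma Real.hasDerivAt_tanh (x : ℝ) : HasDerivAt tanh (1 - tanh x ^ 2) x := by
  have hc : cosh x ≠ 0 := (cosh_pos x).ne'
  rw [show tanh = sinh / cosh from funext tanh_eq_sinh_div_cosh]
  refine ((hasDerivAt_sinh x).div (hasDerivAt_cosh x) hc).congr_deriv ?_
  rw [Pi.div_apply]
  field_simp

lemma Real.hasDerivAt_tanh_const_mul (lam x : ℝ) :
    HasDerivAt (fun y => tanh (lam * y)) (lam * (1 - tanh (lam * x) ^ 2)) x :=
  ((hasDerivAt_tanh (lam * x)).comp x ((hasDerivAt_id x).const_mul lam)).congr_deriv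
    (by simp [mul_comm])

lemma Polynomial.deriv_eval_comp_of_hasDerivAt {T : ℝ → ℝ} {R : ℝ[X]}
    (hT : ∀ x, HasDerivAt T (R.eval (T x)) x) (p : ℝ[X]) :
    deriv (fun x => p.eval (T x)) = fun x => (R * derivative p).eval (T x) := by
  funext x
  rw [eval_mul, mul_comm]
  exact ((p.hasDerivAt (T x)).comp x (hT x)).deriv

theorem abcd_solitary_wave_from_4_3_general
    (c d σ lam : ℝ)
    (η w : ℝ → ℝ)
    (hη : ∀ ξ : ℝ, η ξ = -1)
    (hw : ∀ ξ : ℝ, w ξ = σ*(1 - 4*d*lam^2)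
        + 12*d*lam^2*σ * (1 / Real.cosh (lam * ξ)) ^ 2) :
    ∀ ξ : ℝ,
      (-σ * deriv η ξ + deriv w ξ + deriv (fun x => η x * w x) ξ = 0) ∧
      (-σ * deriv w ξ + deriv η ξ + w ξ * deriv w ξ
        + c * deriv (deriv (deriv η)) ξ + d * σ * deriv (deriv (deriv w)) ξ = 0) := by
  set T : ℝ → ℝ := fun x => tanh (lam * x)
  set q : ℝ[X] := C (σ * (1 - 4 * d * lam ^ 2)) + C (12 * d * lam ^ 2 * σ) * (1 - X ^ 2)
  have hT : ∀ x, HasDerivAt T ((C lam * (1 - X ^ 2)).eval (T x)) x := fun x => by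
    simpa using hasDerivAt_tanh_const_mul lam x
  have hη_eval : η = fun x => (C (-1) : ℝ[X]).eval (T x) := funext fun x => by simp [hη]
  have hw_eval : w = fun x => q.eval (T x) := funext fun x => by
    rw [hw, one_div_cosh_sq]
    simp [q, T]
  have hηw_eval : (fun x => η x * w x) = fun x => (C (-1) * q).eval (T x) := by
    simp only [hη_eval, hw_eval, eval_mul]
  intro ξ
  rw [hηw_eval, hη_eval, hw_eval]
  simp only [deriv_eval_comp_of_hasDerivAt hT, q, derivative_mul, derivative_add,
    derivative_sub, derivative_C, derivative_one, derivative_X_pow]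
  constructor
  · simp
  · simp
    ring

/-- the explicit solitary wave obtained as the `m = 1` limit of the
semi-trivial solution (4.3), `η ≡ -1` and `w = σ(1 - 4dλ²) + 12dλ²σ·sech²(λξ)`,
solves the traveling-wave ODE system of the abcd-system with `a = b = 0`. -/
theorem abcd_solitary_wave_from_4_3
    (c d σ lam : ℝ) (hlam : 0 < lam)
    (η w : ℝ → ℝ)
    (hη : ∀ ξ : ℝ, η ξ = -1)
    (hw : ∀ ξ : ℝ, w ξ = σ*(1 - 4*d*lam^2)
        + 12*d*lam^2*σ * (1 / Real.cosh (lam * ξ)) ^ 2) :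
    ∀ ξ : ℝ,
      (-σ * deriv η ξ + deriv w ξ + deriv (fun x => η x * w x) ξ = 0) ∧
      (-σ * deriv w ξ + deriv η ξ + w ξ * deriv w ξ
        + c * deriv (deriv (deriv η)) ξ + d * σ * deriv (deriv (deriv w)) ξ = 0) :=
  abcd_solitary_wave_from_4_3_general c d σ lam η w hη hw
end
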